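/- The group SL2(E) is generated by the two subgroups U = SL2(O_E) and U' = diag(1, π)·SL2(O_E)·diag(1, π)^{−1}. Consequently, for every module σ over SL2(E) (over any commutative coefficient ring Λ), the submodule of SL2(E)-fixed vectors equals σ^U ∩ σ^{U'}; this is the degree-zero part of the computation of the smooth SL2(E)-cohomology of σ via the Bruhat–Tits building. -/

import Mathlib

noncomputable section

open Matrix

/-- A surjective discrete (rank-one) valuation on a field `E`, written additively.
This is the algebraic structure of a nonarchimedean local field used in the statements. -/
structure DiscreteVal (E : Type) [Field E] : Type where
  v : E → ℤ
  v_mul : ∀ x y : E, x ≠ 0 → y ≠ 0 → v (x * y) = v x + v y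
  v_min_le_add : ∀ x y : E, x ≠ 0 → y ≠ 0 → x + y ≠ 0 → min (v x) (v y) ≤ v (x + y)
  surj : ∀ n : ℤ, ∃ x : E, x ≠ 0 ∧ v x = n

namespace DiscreteVal

variable {E : Type} [Field E]

/-- The valuation ring `O_E = {x : x = 0 or v x ≥ 0}`. -/
def O (ν : DiscreteVal E) : Set E := {x : E | x = 0 ∨ 0 ≤ ν.v x}

/-- `π` is a uniformizer: `π ≠ 0` and `v π = 1`. -/
def IsUniformizer (ν : DiscreteVal E) (π : E) : Prop := π ≠ 0 ∧ ν.v π = 1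

/-- The set `π^m · O_E` for `m : ℤ`. -/
def ball (ν : DiscreteVal E) (π : E) (m : ℤ) : Set E :=
  {y : E | ∃ z ∈ ν.O, y = π ^ m * z}

end DiscreteVal

section ProjLine

variable {E : Type} [Field E]

/-- The point `[a : b]` of the projective line over `E`. -/
def projPt (a b : E) (h : a ≠ 0 ∨ b ≠ 0) : Projectivization E (Fin 2 → E) :=
  Projectivization.mk E ![a, b] (by
    intro hc
    rcases h with h | h
    · exact h (by simpa using congrFun hc 0)
    · exact h (by simpa using congrFun hc 1))

/-- The point `∞ = [0 : 1]`. -/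
def inftyPt (E : Type) [Field E] : Projectivization E (Fin 2 → E) :=
  projPt 0 1 (Or.inr one_ne_zero)

/-- The point `[1 : t]`. -/
def onePt (t : E) : Projectivization E (Fin 2 → E) :=
  projPt 1 t (Or.inl one_ne_zero)

theorem vecMulLinear_injective (g : SpecialLinearGroup (Fin 2) E) :
    Function.Injective (g.1.vecMulLinear) := by
  intro x y hxy
  have h1 : x ᵥ* g.1 = y ᵥ* g.1 := by
    simpa [Matrix.vecMulLinear_apply] using hxy
  have h3 : g.1 * (g⁻¹).1 = 1 := by
    rw [← Matrix.SpecialLinearGroup.coe_mul, mul_inv_cancel, Matrix.SpecialLinearGroup.coe_one]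
  calc x = x ᵥ* (g.1 * (g⁻¹).1) := by rw [h3, Matrix.vecMul_one]
    _ = (x ᵥ* g.1) ᵥ* (g⁻¹).1 := (Matrix.vecMul_vecMul x g.1 (g⁻¹).1).symm
    _ = (y ᵥ* g.1) ᵥ* (g⁻¹).1 := by rw [h1]
    _ = y ᵥ* (g.1 * (g⁻¹).1) := Matrix.vecMul_vecMul y g.1 (g⁻¹).1
    _ = y := by rw [h3, Matrix.vecMul_one]

/-- The right action `[w] · g := [w ᵥ* g]` of `SL₂(E)` on the projective line
(rows vectors times matrix). -/
def ract (x : Projectivization E (Fin 2 → E)) (g : SpecialLinearGroup (Fin 2) E) :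
    Projectivization E (Fin 2 → E) :=
  Projectivization.map (g.1.vecMulLinear) (vecMulLinear_injective g) x

/-- The orbit of `x` under a set `Γ` of elements of `SL₂(E)` (acting on the right). -/
def orbitOf (Γ : Set (SpecialLinearGroup (Fin 2) E))
    (x : Projectivization E (Fin 2 → E)) : Set (Projectivization E (Fin 2 → E)) :=
  {y | ∃ g ∈ Γ, y = ract x g}

variable (ν : DiscreteVal E) (π : E)

/-- The principal congruence subgroup `Γ_k` of level `k` (as a subset of `SL₂(E)`):
integral matrices congruent to the identity modulo `π^k`. -/
def congrSub (k : ℕ) : Set (SpecialLinearGroup (Fin 2) E) :=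
  {g | ∀ i j, g.1 i j - (1 : Matrix (Fin 2) (Fin 2) E) i j ∈ ν.ball π (k : ℤ)}

/-- The maximal compact subgroup `U = SL₂(O_E)` (as a subset of `SL₂(E)`). -/
def slIntegral : Set (SpecialLinearGroup (Fin 2) E) :=
  {g | ∀ i j, g.1 i j ∈ ν.O}

/-- The Iwahori subgroup `Γ₀` (as a subset): integral matrices whose
lower-left entry lies in `πO_E`. -/
def iwahori : Set (SpecialLinearGroup (Fin 2) E) :=
  {g | (∀ i j, g.1 i j ∈ ν.O) ∧ g.1 1 0 ∈ ν.ball π 1}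

/-- The subgroup `U' = diag(1,π) SL₂(O_E) diag(1,π)⁻¹` (as a subset), described
by entry conditions. -/
def slConj : Set (SpecialLinearGroup (Fin 2) E) :=
  {g | g.1 0 0 ∈ ν.O ∧ g.1 1 1 ∈ ν.O ∧ g.1 0 1 ∈ ν.ball π (-1) ∧ g.1 1 0 ∈ ν.ball π 1}

end ProjLine

/-!
Over any field, `SL₂` is generated by the upper unipotents and `w = !![0, -1; 1, 0]`:
a matrix with nonzero lower-left entry is `upper * lower * upper`, `lower` is
`w`-conjugate to `upper`, and left multiplication by `w` moves the (nonzero) upper-left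
entry to the lower-left corner. Now `U` contains `w` and the integral upper unipotents,
while `U'` contains `!![0, π⁻¹; -π, 0]`, whose product with `w` is `diag(π⁻¹, π)`.
Conjugating by it divides the upper-right entry by `π²`, and every element of `E` becomes
integral after multiplication by a large even power of `π`.
-/

open scoped MatrixGroups

namespace SL2

variable {F : Type} [Field F]

def upper (t : F) : SL(2, F) :=
  ⟨!![1, t; 0, 1], by simp [Matrix.det_fin_two_of]⟩

def lower (t : F) : SL(2, F) :=
  ⟨!![1, 0; t, 1], by simp [Matrix.det_fin_two_of]⟩

def weyl : SL(2, F) :=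
  ⟨!![0, -1; 1, 0], by simp [Matrix.det_fin_two_of]⟩

@[simp]
lemma coe_upper (t : F) : (upper t : Matrix (Fin 2) (Fin 2) F) = !![1, t; 0, 1] := rfl

@[simp]
lemma coe_lower (t : F) : (lower t : Matrix (Fin 2) (Fin 2) F) = !![1, 0; t, 1] := rfl

@[simp]
lemma coe_weyl : ((weyl : SL(2, F)) : Matrix (Fin 2) (Fin 2) F) = !![0, -1; 1, 0] := rfl

lemma det_eq_one (g : SL(2, F)) : g 0 0 * g 1 1 - g 0 1 * g 1 0 = 1 := by
  rw [← Matrix.det_fin_two]; exact g.det_coe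

lemma weyl_mul_lower (t : F) : weyl * lower t = upper (-t) * weyl := by
  ext i j
  fin_cases i <;> fin_cases j <;> simp [Matrix.mul_apply, Fin.sum_univ_two]

lemma weyl_mul_apply_one_zero (g : SL(2, F)) : ((weyl : SL(2, F)) * g) 1 0 = g 0 0 := by
  simp [Matrix.mul_apply, Fin.sum_univ_two]

lemma eq_upper_mul_lower_mul_upper (g : SL(2, F)) (hc : g 1 0 ≠ 0) :
    g = upper ((g 0 0 - 1) / g 1 0) * lower (g 1 0) * upper ((g 1 1 - 1) / g 1 0) := by
  have hdet := det_eq_one g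
  ext i j
  fin_cases i <;> fin_cases j <;>
    simp [Matrix.mul_apply, Fin.sum_univ_two] <;>
    field_simp <;> grind

theorem closure_insert_weyl_range_upper :
    Subgroup.closure (insert weyl (Set.range upper)) = (⊤ : Subgroup SL(2, F)) := by
  set H := Subgroup.closure (insert (weyl : SL(2, F)) (Set.range upper))
  have weyl_mem : weyl ∈ H := Subgroup.subset_closure (Set.mem_insert _ _)
  have upper_mem (t : F) : upper t ∈ H :=
    Subgroup.subset_closure (Set.mem_insert_of_mem _ ⟨t, rfl⟩)
  have lower_mem (t : F) : lower t ∈ H := by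
    rw [eq_inv_mul_of_mul_eq (weyl_mul_lower t)]
    exact H.mul_mem (H.inv_mem weyl_mem) (H.mul_mem (upper_mem _) weyl_mem)
  have mem_of_ne (g : SL(2, F)) (hc : g 1 0 ≠ 0) : g ∈ H := by
    rw [eq_upper_mul_lower_mul_upper g hc]
    exact H.mul_mem (H.mul_mem (upper_mem _) (lower_mem _)) (upper_mem _)
  refine (Subgroup.eq_top_iff' H).2 fun g => ?_
  by_cases hc : g 1 0 = 0
  · have ha : g 0 0 ≠ 0 := by
      intro ha
      simpa [ha, hc] using det_eq_one g
    rw [← inv_mul_cancel_left weyl g]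
    exact H.mul_mem (H.inv_mem weyl_mem) (mem_of_ne _ (by rwa [weyl_mul_apply_one_zero]))
  · exact mem_of_ne g hc

def diag (a : Fˣ) : SL(2, F) :=
  ⟨!![↑a⁻¹, 0; 0, ↑a], by simp [Matrix.det_fin_two_of]⟩

def antidiag (a : Fˣ) : SL(2, F) :=
  ⟨!![0, ↑a⁻¹; -↑a, 0], by simp [Matrix.det_fin_two_of]⟩

@[simp]
lemma coe_diag (a : Fˣ) : (diag a : Matrix (Fin 2) (Fin 2) F) = !![↑a⁻¹, 0; 0, ↑a] := rfl

@[simp]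
lemma coe_antidiag (a : Fˣ) : (antidiag a : Matrix (Fin 2) (Fin 2) F) = !![0, ↑a⁻¹; -↑a, 0] :=
  rfl

lemma antidiag_mul_weyl (a : Fˣ) : antidiag a * weyl = diag a := by
  ext i j
  fin_cases i <;> fin_cases j <;> simp [Matrix.mul_apply, Fin.sum_univ_two]

lemma diag_mul_upper_mul_inv (a : Fˣ) (t : F) :
    diag a * upper t * (diag a)⁻¹ = upper (t / (a : F) ^ 2) := by
  rw [mul_inv_eq_iff_eq_mul]
  ext i j
  fin_cases i <;> fin_cases j <;> simp [Matrix.mul_apply, Fin.sum_univ_two]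
  field_simp

end SL2

theorem Representation.mem_invariants_iff_of_closure_eq_top {k G V : Type*} [CommRing k]
    [Group G] [AddCommGroup V] [Module k V] (ρ : Representation k G V) {S : Set G}
    (hS : Subgroup.closure S = ⊤) (x : V) : x ∈ ρ.invariants ↔ ∀ g ∈ S, ρ g x = x := by
  refine ⟨fun hx g _ => hx g, fun hx g => ?_⟩
  induction hS.ge (Subgroup.mem_top g) using Subgroup.closure_induction with
  | mem g hg => exact hx g hg
  | one => simp
  | mul g h _ _ hg hh => rw [map_mul, Module.End.mul_apply, hh, hg]
  | inv g _ hg => rw [ρ.inv_apply_eq_iff, hg]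

namespace DiscreteVal

variable {E : Type} [Field E] (ν : DiscreteVal E)

lemma v_one : ν.v 1 = 0 := by
  have h := ν.v_mul 1 1 one_ne_zero one_ne_zero
  rw [one_mul] at h
  omega

lemma v_neg_one : ν.v (-1) = 0 := by
  have h := ν.v_mul (-1) (-1) (by norm_num) (by norm_num)
  rw [neg_mul_neg, one_mul, v_one] at h
  omega

lemma zero_mem_O : (0 : E) ∈ ν.O := Or.inl rfl

lemma one_mem_O : (1 : E) ∈ ν.O := Or.inr ν.v_one.ge

lemma neg_one_mem_O : (-1 : E) ∈ ν.O := Or.inr ν.v_neg_one.ge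

lemma v_pow_mul {π t : E} (hπ : π ≠ 0) (ht : t ≠ 0) (n : ℕ) :
    ν.v (π ^ n * t) = n * ν.v π + ν.v t := by
  induction n with
  | zero => simp
  | succ n ih =>
    rw [pow_succ', mul_assoc, ν.v_mul _ _ hπ (mul_ne_zero (pow_ne_zero _ hπ) ht), ih]
    push_cast
    ring

lemma exists_pow_mul_mem_O {π : E} (hπ : π ≠ 0) (hv : 0 < ν.v π) (t : E) :
    ∃ k : ℕ, π ^ (2 * k) * t ∈ ν.O := by
  refine ⟨(ν.v t).natAbs, ?_⟩
  rcases eq_or_ne t 0 with rfl | ht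
  · simp [zero_mem_O]
  · right
    rw [ν.v_pow_mul hπ ht]
    push_cast
    nlinarith [abs_nonneg (ν.v t), neg_abs_le (ν.v t)]

lemma inv_mem_ball (π : E) : π⁻¹ ∈ ν.ball π (-1) := ⟨1, ν.one_mem_O, by simp⟩

lemma neg_mem_ball_one (π : E) : -π ∈ ν.ball π 1 := ⟨-1, ν.neg_one_mem_O, by simp⟩

end DiscreteVal

section Generation

variable {E : Type} [Field E] (ν : DiscreteVal E) (π : E)

lemma upper_mem_slIntegral {t : E} (ht : t ∈ ν.O) : SL2.upper t ∈ slIntegral ν := by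
  intro i j
  fin_cases i <;> fin_cases j <;> simp [ht, ν.zero_mem_O, ν.one_mem_O]

lemma weyl_mem_slIntegral : SL2.weyl ∈ slIntegral ν := by
  intro i j
  fin_cases i <;> fin_cases j <;> simp [ν.zero_mem_O, ν.one_mem_O, ν.neg_one_mem_O]

lemma antidiag_mem_slConj (hπ : π ≠ 0) : SL2.antidiag (Units.mk0 π hπ) ∈ slConj ν π := by
  refine ⟨?_, ?_, ?_, ?_⟩ <;>
    simp [ν.zero_mem_O, ν.inv_mem_ball π, ν.neg_mem_ball_one π]

theorem closure_slIntegral_union_slConj {π : E} (hπ : π ≠ 0) (hv : 0 < ν.v π) :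
    Subgroup.closure (slIntegral ν ∪ slConj ν π) = ⊤ := by
  set H := Subgroup.closure (slIntegral ν ∪ slConj ν π)
  have upper_mem_of_mem_O {s : E} (hs : s ∈ ν.O) : SL2.upper s ∈ H :=
    Subgroup.subset_closure (Or.inl (upper_mem_slIntegral ν hs))
  have weyl_mem : SL2.weyl ∈ H := Subgroup.subset_closure (Or.inl (weyl_mem_slIntegral ν))
  have diag_mem : SL2.diag (Units.mk0 π hπ) ∈ H := by
    rw [← SL2.antidiag_mul_weyl]
    exact H.mul_mem (Subgroup.subset_closure (Or.inr (antidiag_mem_slConj ν π hπ))) weyl_mem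
  have upper_div_pow_mem (k : ℕ) {s : E} (hs : s ∈ ν.O) :
      SL2.upper (s / π ^ (2 * k)) ∈ H := by
    induction k with
    | zero => simpa using upper_mem_of_mem_O hs
    | succ k ih =>
      rw [show s / π ^ (2 * (k + 1)) = s / π ^ (2 * k) / (Units.mk0 π hπ : E) ^ 2 by
        rw [Units.val_mk0]; ring, ← SL2.diag_mul_upper_mul_inv]
      exact H.mul_mem (H.mul_mem diag_mem ih) (H.inv_mem diag_mem)
  rw [eq_top_iff, ← SL2.closure_insert_weyl_range_upper, Subgroup.closure_le]
  rintro _ (rfl | ⟨t, rfl⟩)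
  · exact weyl_mem
  · obtain ⟨k, hk⟩ := ν.exists_pow_mul_mem_O hπ hv t
    simpa [hπ] using upper_div_pow_mem k hk

end Generation

theorem sl2_generated_by_U_and_U'
    {E : Type} [Field E] (ν : DiscreteVal E) (π : E) (hπ : ν.IsUniformizer π) :
    Subgroup.closure (slIntegral ν ∪ slConj ν π) =
        (⊤ : Subgroup (SpecialLinearGroup (Fin 2) E)) ∧
      ∀ (Λ : Type) [CommRing Λ] (σ : Type) [AddCommGroup σ] [Module Λ σ]
        (ρ : Representation Λ (SpecialLinearGroup (Fin 2) E) σ),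
        {x : σ | ∀ g : SpecialLinearGroup (Fin 2) E, ρ g x = x} =
          {x : σ | ∀ g ∈ slIntegral ν, ρ g x = x} ∩
            {x : σ | ∀ g ∈ slConj ν π, ρ g x = x} := by
  have hgen := closure_slIntegral_union_slConj ν hπ.1 (hπ.2 ▸ one_pos)
  refine ⟨hgen, fun Λ _ σ _ _ ρ => Set.ext fun x => ?_⟩
  simpa [or_imp, forall_and] using
    ρ.mem_invariants_iff_of_closure_eq_top hgen x
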